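/- Let R be a commutative ring, σ an endomorphism of R, and M an R-module. If R has only trivial idempotents, then the Nagata extension N of R by M and σ is i-reversible. -/

import Mathlib

/-- A ring is *i-reversible* if whenever `a * b` is a non-zero idempotent, `b * a` is an
idempotent. -/
def IsIReversible (S : Type*) [Ring S] : Prop :=
  ∀ a b : S, IsIdempotentElem (a * b) → a * b ≠ 0 → IsIdempotentElem (b * a)

/-- A ring has only trivial idempotents if its only idempotents are `0` and `1`. -/
def HasOnlyTrivialIdempotents (S : Type*) [Ring S] : Prop :=
  ∀ e : S, IsIdempotentElem e → e = 0 ∨ e = 1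

/-- The Nagata extension of a commutative ring `R` by an `R`-module `M` and an endomorphism
`σ` of `R`: the underlying set is `R × M`, with multiplication
`(r₁, m₁) * (r₂, m₂) = (r₁ * r₂, σ r₁ • m₂ + r₂ • m₁)`. -/
def NagataExt (R M : Type*) [CommRing R] [AddCommGroup M] [Module R M] (σ : R →+* R) :
    Type _ := R × M

namespace NagataExt

variable {R M : Type*} [CommRing R] [AddCommGroup M] [Module R M] {σ : R →+* R}

instance : AddCommGroup (NagataExt R M σ) := inferInstanceAs (AddCommGroup (R × M))

instance : Mul (NagataExt R M σ) :=
  ⟨fun a b => ((a.1 * b.1 : R), (σ a.1 • b.2 + b.1 • a.2 : M))⟩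

instance : One (NagataExt R M σ) := ⟨((1 : R), (0 : M))⟩

lemma mul_def (a b : NagataExt R M σ) :
    a * b = ((a.1 * b.1 : R), (σ a.1 • b.2 + b.1 • a.2 : M)) := rfl

instance : Ring (NagataExt R M σ) :=
  { (inferInstance : AddCommGroup (NagataExt R M σ)),
    (inferInstance : Mul (NagataExt R M σ)),
    (inferInstance : One (NagataExt R M σ)) with
    mul_assoc := by
      rintro ⟨a1, a2⟩ ⟨b1, b2⟩ ⟨c1, c2⟩
      refine Prod.ext ?_ ?_
      · show a1 * b1 * c1 = a1 * (b1 * c1); ring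
      · show σ (a1 * b1) • c2 + c1 • (σ a1 • b2 + b1 • a2)
          = σ a1 • (σ b1 • c2 + c1 • b2) + (b1 * c1) • a2
        simp only [map_mul, smul_add, smul_smul]
        rw [mul_comm c1 (σ a1), mul_comm c1 b1]; abel
    one_mul := by
      rintro ⟨a1, a2⟩
      refine Prod.ext ?_ ?_
      · show 1 * a1 = a1; ring
      · show σ 1 • a2 + a1 • (0 : M) = a2; simp
    mul_one := by
      rintro ⟨a1, a2⟩
      refine Prod.ext ?_ ?_
      · show a1 * 1 = a1; ring
      · show σ a1 • (0 : M) + (1 : R) • a2 = a2; simp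
    left_distrib := by
      rintro ⟨a1, a2⟩ ⟨b1, b2⟩ ⟨c1, c2⟩
      refine Prod.ext ?_ ?_
      · show a1 * (b1 + c1) = a1 * b1 + a1 * c1; ring
      · show σ a1 • (b2 + c2) + (b1 + c1) • a2
          = (σ a1 • b2 + b1 • a2) + (σ a1 • c2 + c1 • a2)
        simp only [smul_add, add_smul]; abel
    right_distrib := by
      rintro ⟨a1, a2⟩ ⟨b1, b2⟩ ⟨c1, c2⟩
      refine Prod.ext ?_ ?_
      · show (a1 + b1) * c1 = a1 * c1 + b1 * c1; ring
      · show σ (a1 + b1) • c2 + c1 • (a2 + b2)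
          = (σ a1 • c2 + c1 • a2) + (σ b1 • c2 + c1 • b2)
        simp only [map_add, smul_add, add_smul]; abel
    zero_mul := by
      rintro ⟨a1, a2⟩
      refine Prod.ext ?_ ?_
      · show (0 : R) * a1 = 0; ring
      · show σ 0 • a2 + a1 • (0 : M) = 0; simp
    mul_zero := by
      rintro ⟨a1, a2⟩
      refine Prod.ext ?_ ?_
      · show a1 * 0 = 0; ring
      · show σ a1 • (0 : M) + (0 : R) • a2 = 0; simp }

end NagataExt

/-! If `a * b` is a non-zero idempotent of `N = R ⊕ M`, its `R`-component is a non-zero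
idempotent of `R`, hence `1`; the `M`-component `v` then satisfies `v = v + v`, so `a * b = 1`.
An element of `N` whose `R`-component is a unit is invertible, so `N` is Dedekind-finite and
`b * a = 1` is idempotent as well. -/

theorem IsIReversible.of_hasOnlyTrivialIdempotents {S : Type*} [Ring S]
    [IsDedekindFiniteMonoid S] (h : HasOnlyTrivialIdempotents S) : IsIReversible S :=
  fun _ _ hab hne => mul_eq_one_symm ((h _ hab).resolve_left hne) ▸ .one

namespace NagataExt

variable {R M : Type*} [CommRing R] [AddCommGroup M] [Module R M] {σ : R →+* R}

@[ext]
lemma ext {x y : NagataExt R M σ} (h₁ : x.1 = y.1) (h₂ : x.2 = y.2) : x = y :=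
  Prod.ext h₁ h₂

theorem hasOnlyTrivialIdempotents (h : HasOnlyTrivialIdempotents R) :
    HasOnlyTrivialIdempotents (NagataExt R M σ) := by
  intro e he
  have he₂ : e.2 = σ e.1 • e.2 + e.1 • e.2 := (congrArg Prod.snd he).symm
  rcases h e.1 (congrArg Prod.fst he) with h₀ | h₁
  · exact .inl (ext h₀ (by simpa [h₀] using he₂ : e.2 = 0))
  · exact .inr (ext h₁ (by simpa [h₁] using he₂ : e.2 = 0))

instance : IsDedekindFiniteMonoid (NagataExt R M σ) :=
  .of_exists_mul_self_eq_one _ fun x y hxy => by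
    have h : x.1 * y.1 = 1 := congrArg Prod.fst hxy
    refine ⟨((y.1, -(y.1 * σ y.1) • x.2) : NagataExt R M σ), ext ?_ ?_⟩
    · show y.1 * x.1 = 1
      rw [mul_comm, h]
    · show σ y.1 • x.2 + x.1 • (-(y.1 * σ y.1) • x.2) = 0
      rw [smul_smul, mul_neg, ← mul_assoc, h, one_mul, neg_smul, add_neg_cancel]

end NagataExt

/-- If a commutative ring `R` has only trivial idempotents, then the Nagata extension of
`R` by an `R`-module `M` and an endomorphism `σ` is i-reversible. -/
theorem nagataExt_isIReversible (R M : Type*) [CommRing R] [AddCommGroup M] [Module R M]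
    (σ : R →+* R) (h : HasOnlyTrivialIdempotents R) :
    IsIReversible (NagataExt R M σ) :=
  .of_hasOnlyTrivialIdempotents (NagataExt.hasOnlyTrivialIdempotents h)
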